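/- arXiv:1810.05245 — 2 statements merged into one kernel-verified Lean document; each statement's English description precedes it below -/
import Mathlib

section
/- There exists a constant α > 0 (independent of p) such that the following holds for every real p ≥ 1 and every scalar Θ > 0: let {X_{i,j}}_{i ∈ [m], j ∈ [n]} be independent random variables taking values in [0, αΘ] and let S_i := Σ_j X_{i,j}. If E (Σ_i S_i^p)^{1/p} ≤ Θ, then Σ_{i,j} E X_{i,j}^p ≤ (4Θ)^p. -/
/-!
Take `α = 1`, put `Y_{ij} = X_{ij}^p ∈ [0, Θ^p]`, `T = ∑ Y_{ij}` and `c = 𝔼 T`. Superadditivity of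
`x ↦ x^p` gives `T ≤ ∑_i S_i^p`, so the hypothesis yields `𝔼 T^{1/p} ≤ Θ`. Independence gives
`Var T ≤ Θ^p c`; hence if `c ≥ 4 Θ^p`, then `𝔼 |T - c| ≤ c / 2`, and the pointwise bound
`T^{1/p} ≥ c^{1/p - 1} min(T, c)` yields `𝔼 T^{1/p} ≥ c^{1/p} / 2`, i.e. `c ≤ (2Θ)^p`.
-/

open MeasureTheory ProbabilityTheory

namespace Real

lemma sum_rpow_le_rpow_sum {ι : Type*} {p : ℝ} (hp : 1 ≤ p) (s : Finset ι) {f : ι → ℝ}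
    (hf : ∀ i ∈ s, 0 ≤ f i) : ∑ i ∈ s, f i ^ p ≤ (∑ i ∈ s, f i) ^ p := by
  classical
  induction s using Finset.induction_on with
  | empty => simp [zero_rpow (by linarith : p ≠ 0)]
  | insert a s ha ih =>
    have hs : ∀ i ∈ s, 0 ≤ f i := fun i hi => hf i (Finset.mem_insert_of_mem hi)
    rw [Finset.sum_insert ha, Finset.sum_insert ha]
    calc f a ^ p + ∑ i ∈ s, f i ^ p ≤ f a ^ p + (∑ i ∈ s, f i) ^ p := by gcongr; exact ih hs
      _ ≤ (f a + ∑ i ∈ s, f i) ^ p :=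
        add_rpow_le_rpow_add (hf a (Finset.mem_insert_self a s)) (Finset.sum_nonneg hs) hp

lemma rpow_sum_rpow_le_sum {ι : Type*} {p : ℝ} (hp : 1 ≤ p) (s : Finset ι) {f : ι → ℝ}
    (hf : ∀ i ∈ s, 0 ≤ f i) : (∑ i ∈ s, f i ^ p) ^ (1 / p) ≤ ∑ i ∈ s, f i := by
  rw [one_div, rpow_inv_le_iff_of_pos (Finset.sum_nonneg fun i hi => rpow_nonneg (hf i hi) p)
    (Finset.sum_nonneg hf) (by linarith)]
  exact sum_rpow_le_rpow_sum hp s hf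

lemma rpow_sub_one_mul_min_le_rpow {q c t : ℝ} (hq0 : 0 ≤ q) (hq1 : q ≤ 1) (hc : 0 < c)
    (ht : 0 ≤ t) : c ^ (q - 1) * min t c ≤ t ^ q := by
  rcases le_total t c with htc | hct
  · rw [min_eq_left htc]
    rcases ht.eq_or_lt with rfl | ht0
    · rw [mul_zero]; exact rpow_nonneg le_rfl q
    · calc c ^ (q - 1) * t ≤ t ^ (q - 1) * t :=
            mul_le_mul_of_nonneg_right (rpow_le_rpow_of_nonpos ht0 htc (by linarith)) ht
        _ = t ^ q := by rw [← rpow_add_one ht0.ne', sub_add_cancel]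
  · rw [min_eq_right hct, ← rpow_add_one hc.ne', sub_add_cancel]
    exact rpow_le_rpow hc.le hct hq0

end Real

namespace ProbabilityTheory

variable {Ω : Type*} [MeasurableSpace Ω] {μ : Measure Ω} [IsProbabilityMeasure μ]

lemma integral_abs_sub_integral_le_sqrt_variance {X : Ω → ℝ} (hX : MemLp X 2 μ) :
    ∫ ω, |X ω - μ[X]| ∂μ ≤ √(variance X μ) := by
  set D : Ω → ℝ := fun ω => |X ω - μ[X]|
  have hD : MemLp D 2 μ := (hX.sub (memLp_const _)).abs
  have hD2 : μ[D ^ 2] = variance X μ := by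
    rw [variance_eq_integral hX.aemeasurable]
    simp [D, sq_abs]
  have hsq : μ[D] ^ 2 ≤ variance X μ := by
    have := variance_nonneg D μ
    rw [variance_eq_sub hD, hD2] at this
    linarith
  exact (le_abs_self _).trans (Real.abs_le_sqrt hsq)

lemma integral_sub_sqrt_variance_le_integral_min {X : Ω → ℝ} (hX : MemLp X 2 μ) :
    μ[X] - √(variance X μ) ≤ ∫ ω, min (X ω) μ[X] ∂μ := by
  have hXi := hX.integrable one_le_two
  have hD : Integrable (fun ω => |X ω - μ[X]|) μ := (hXi.sub (integrable_const _)).abs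
  calc μ[X] - √(variance X μ) ≤ μ[X] - ∫ ω, |X ω - μ[X]| ∂μ := by
        gcongr; exact integral_abs_sub_integral_le_sqrt_variance hX
    _ = ∫ ω, (μ[X] - |X ω - μ[X]|) ∂μ := by
        rw [integral_sub (integrable_const _) hD, integral_const]; simp
    _ ≤ ∫ ω, min (X ω) μ[X] ∂μ :=
        integral_mono ((integrable_const _).sub hD) (hXi.inf (integrable_const _)) fun ω =>
          le_min (by linarith [neg_abs_le (X ω - μ[X])]) (by linarith [abs_nonneg (X ω - μ[X])])

lemma integral_rpow_sub_one_mul_sub_sqrt_variance_le_integral_rpow {X : Ω → ℝ} {q : ℝ}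
    (hq0 : 0 ≤ q) (hq1 : q ≤ 1) (hX : MemLp X 2 μ) (hX0 : ∀ ω, 0 ≤ X ω)
    (hXq : Integrable (fun ω => X ω ^ q) μ) (hc : 0 < μ[X]) :
    μ[X] ^ (q - 1) * (μ[X] - √(variance X μ)) ≤ ∫ ω, X ω ^ q ∂μ := by
  have hmin : Integrable (fun ω => min (X ω) μ[X]) μ :=
    (hX.integrable one_le_two).inf (integrable_const _)
  calc μ[X] ^ (q - 1) * (μ[X] - √(variance X μ))
      ≤ μ[X] ^ (q - 1) * ∫ ω, min (X ω) μ[X] ∂μ := by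
        gcongr; exact integral_sub_sqrt_variance_le_integral_min hX
    _ = ∫ ω, μ[X] ^ (q - 1) * min (X ω) μ[X] ∂μ := (integral_const_mul _ _).symm
    _ ≤ ∫ ω, X ω ^ q ∂μ := integral_mono (hmin.const_mul _) hXq fun ω =>
        Real.rpow_sub_one_mul_min_le_rpow hq0 hq1 hc (hX0 ω)

lemma variance_le_mul_integral_of_mem_Icc {X : Ω → ℝ} {b : ℝ} (hX : AEMeasurable X μ)
    (hXb : ∀ᵐ ω ∂μ, X ω ∈ Set.Icc 0 b) : variance X μ ≤ b * μ[X] := by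
  have hXi : Integrable X μ :=
    (memLp_of_bounded hXb hX.aestronglyMeasurable 1).integrable le_rfl
  calc variance X μ ≤ μ[X ^ 2] := variance_le_expectation_sq hX.aestronglyMeasurable
    _ ≤ ∫ ω, b * X ω ∂μ :=
        integral_mono_of_nonneg (f := X ^ 2) (ae_of_all _ fun ω => sq_nonneg (X ω))
          (hXi.const_mul b) (hXb.mono fun ω h => show X ω ^ 2 ≤ b * X ω by nlinarith [h.1, h.2])
    _ = b * μ[X] := integral_const_mul b _

lemma variance_sum_le_mul_integral_sum {ι : Type*} {s : Finset ι} {X : ι → Ω → ℝ} {b : ℝ}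
    (hX : ∀ i ∈ s, AEMeasurable (X i) μ) (hXb : ∀ i ∈ s, ∀ᵐ ω ∂μ, X i ω ∈ Set.Icc 0 b)
    (hind : Set.Pairwise ↑s fun i j => IndepFun (X i) (X j) μ) :
    variance (∑ i ∈ s, X i) μ ≤ b * μ[∑ i ∈ s, X i] := by
  have hL2 : ∀ i ∈ s, MemLp (X i) 2 μ := fun i hi =>
    memLp_of_bounded (hXb i hi) (hX i hi).aestronglyMeasurable 2
  rw [IndepFun.variance_sum hL2 hind, Finset.sum_fn,
    integral_finsetSum s fun i hi => (hL2 i hi).integrable one_le_two, Finset.mul_sum]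
  exact Finset.sum_le_sum fun i hi => variance_le_mul_integral_of_mem_Icc (hX i hi) (hXb i hi)

lemma integral_le_max_of_variance_le_mul_integral {T : Ω → ℝ} {p b Θ : ℝ} (hp : 1 ≤ p)
    (hb : 0 ≤ b) (hT : MemLp T 2 μ) (hT0 : ∀ ω, 0 ≤ T ω)
    (hTp : Integrable (fun ω => T ω ^ (1 / p)) μ) (hvar : variance T μ ≤ b * μ[T])
    (h : ∫ ω, T ω ^ (1 / p) ∂μ ≤ Θ) : μ[T] ≤ max (4 * b) ((2 * Θ) ^ p) := by
  rcases le_or_gt μ[T] (4 * b) with hsmall | hlarge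
  · exact le_max_of_le_left hsmall
  have hp0 : 0 < p := by linarith
  have hc : 0 < μ[T] := by linarith
  have hsqrt : √(variance T μ) ≤ μ[T] / 2 := Real.sqrt_le_iff.2 ⟨by positivity, by nlinarith⟩
  have hhalf : μ[T] ^ (1 / p) / 2 ≤ Θ := calc
    μ[T] ^ (1 / p) / 2 = μ[T] ^ (1 / p - 1) * (μ[T] / 2) := by
      rw [mul_div_assoc', ← Real.rpow_add_one hc.ne', sub_add_cancel]
    _ ≤ μ[T] ^ (1 / p - 1) * (μ[T] - √(variance T μ)) := by gcongr; linarith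
    _ ≤ ∫ ω, T ω ^ (1 / p) ∂μ :=
      integral_rpow_sub_one_mul_sub_sqrt_variance_le_integral_rpow (by positivity)
        (by rw [div_le_one hp0]; exact hp) hT hT0 hTp hc
    _ ≤ Θ := h
  have hcp : μ[T] ^ p⁻¹ ≤ 2 * Θ := by rw [← one_div]; linarith
  refine le_max_of_le_right ?_
  rwa [Real.rpow_inv_le_iff_of_pos hc.le (by linarith [Real.rpow_nonneg hc.le p⁻¹]) hp0] at hcp

theorem integral_sum_le_of_integral_rpow_sum_le {ι : Type*} [Fintype ι] {X : ι → Ω → ℝ}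
    {p Θ : ℝ} (hp : 1 ≤ p) (hΘ : 0 < Θ) (hX : ∀ i, AEMeasurable (X i) μ)
    (hXb : ∀ i ω, X i ω ∈ Set.Icc 0 (Θ ^ p)) (hind : Pairwise fun i j => IndepFun (X i) (X j) μ)
    (h : ∫ ω, (∑ i, X i ω) ^ (1 / p) ∂μ ≤ Θ) :
    ∑ i, μ[X i] ≤ (4 * Θ) ^ p := by
  set T : Ω → ℝ := ∑ i, X i
  have hTapp (ω : Ω) : T ω = ∑ i, X i ω := Finset.sum_apply ω _ _
  have hTb (ω : Ω) : T ω ∈ Set.Icc 0 (Fintype.card ι * Θ ^ p) := by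
    rw [hTapp, ← nsmul_eq_mul, ← Finset.card_univ, ← Finset.sum_const]
    exact ⟨Finset.sum_nonneg fun i _ => (hXb i ω).1, Finset.sum_le_sum fun i _ => (hXb i ω).2⟩
  have hTm : AEMeasurable T μ := Finset.aemeasurable_sum _ fun i _ => hX i
  have hTp : Integrable (fun ω => T ω ^ (1 / p)) μ :=
    (memLp_of_bounded (a := 0) (b := (Fintype.card ι * Θ ^ p) ^ (1 / p))
      (ae_of_all _ fun ω => ⟨Real.rpow_nonneg (hTb ω).1 _,
        Real.rpow_le_rpow (hTb ω).1 (hTb ω).2 (by positivity)⟩)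
      (hTm.pow_const _).aestronglyMeasurable 1).integrable le_rfl
  have hmean : μ[T] = ∑ i, μ[X i] := by
    simp only [hTapp]
    exact integral_finsetSum _ fun i _ =>
      (memLp_of_bounded (ae_of_all _ (hXb i)) (hX i).aestronglyMeasurable 1).integrable le_rfl
  have hvar : variance T μ ≤ Θ ^ p * μ[T] :=
    variance_sum_le_mul_integral_sum (fun i _ => hX i) (fun i _ => ae_of_all _ (hXb i))
      fun i _ j _ hij => hind hij
  have hmax := integral_le_max_of_variance_le_mul_integral hp (by positivity)
    (memLp_of_bounded (ae_of_all _ hTb) hTm.aestronglyMeasurable 2) (fun ω => (hTb ω).1) hTp hvar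
    (by simpa only [hTapp] using h)
  rw [← hmean]
  refine hmax.trans (max_le ?_ (by gcongr; norm_num))
  rw [Real.mul_rpow (by norm_num) hΘ.le]
  gcongr
  exact Real.self_le_rpow_of_one_le (by norm_num) hp

end ProbabilityTheory

theorem stmt_5 : ∃ α : ℝ, 0 < α ∧
    ∀ (p : ℝ), 1 ≤ p → ∀ (Θ : ℝ), 0 < Θ →
    ∀ (Ω : Type*) (_ : MeasurableSpace Ω) (μ : Measure Ω), IsProbabilityMeasure μ →
    ∀ (m n : ℕ) (X : Fin m × Fin n → Ω → ℝ),
      (∀ ij, Measurable (X ij)) → (∀ ij ω, X ij ω ∈ Set.Icc 0 (α * Θ)) →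
      iIndepFun X μ →
      ∫ ω, (∑ i, (∑ j, X (i, j) ω) ^ p) ^ (1 / p) ∂μ ≤ Θ →
      ∑ ij : Fin m × Fin n, ∫ ω, X ij ω ^ p ∂μ ≤ (4 * Θ) ^ p := by
  refine ⟨1, one_pos, fun p hp Θ hΘ Ω _ μ _ m n X hXm hXb hind hnorm => ?_⟩
  simp only [one_mul] at hXb
  have hpow : Measurable fun x : ℝ => x ^ p := measurable_id.pow_const p
  have hXp (ij : Fin m × Fin n) (ω : Ω) : X ij ω ^ p ∈ Set.Icc 0 (Θ ^ p) :=
    ⟨Real.rpow_nonneg (hXb ij ω).1 p, Real.rpow_le_rpow (hXb ij ω).1 (hXb ij ω).2 (by linarith)⟩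
  have hrow (ω : Ω) (i : Fin m) : ∀ j ∈ Finset.univ, 0 ≤ X (i, j) ω := fun j _ => (hXb (i, j) ω).1
  set Z : Ω → ℝ := fun ω => (∑ i, (∑ j, X (i, j) ω) ^ p) ^ (1 / p)
  have hZ0 (ω : Ω) : 0 ≤ Z ω := Real.rpow_nonneg
    (Finset.sum_nonneg fun i _ => Real.rpow_nonneg (Finset.sum_nonneg (hrow ω i)) p) _
  have hZ_le (ω : Ω) : Z ω ≤ ∑ ij, X ij ω := by
    rw [Fintype.sum_prod_type]
    exact Real.rpow_sum_rpow_le_sum hp _ fun i _ => Finset.sum_nonneg (hrow ω i)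
  have hle_Z (ω : Ω) : (∑ ij, X ij ω ^ p) ^ (1 / p) ≤ Z ω := by
    refine Real.rpow_le_rpow (Finset.sum_nonneg fun ij _ => (hXp ij ω).1) ?_ (by positivity)
    rw [Fintype.sum_prod_type]
    exact Finset.sum_le_sum fun i _ => Real.sum_rpow_le_rpow_sum hp _ (hrow ω i)
  have hX_int (ij : Fin m × Fin n) : Integrable (X ij) μ :=
    (memLp_of_bounded (ae_of_all _ (hXb ij)) (hXm ij).aestronglyMeasurable 1).integrable le_rfl
  have hZ_int : Integrable Z μ :=
    (integrable_finsetSum (f := X) Finset.univ fun ij _ => hX_int ij).mono'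
      (by fun_prop : Measurable Z).aestronglyMeasurable
      (ae_of_all _ fun ω => (Real.norm_of_nonneg (hZ0 ω)).trans_le (hZ_le ω))
  refine integral_sum_le_of_integral_rpow_sum_le hp hΘ (fun ij => (hpow.comp (hXm ij)).aemeasurable)
    hXp (fun ij kl hne => (hind.indepFun hne).comp hpow hpow) ?_
  exact (integral_mono_of_nonneg (ae_of_all _ fun ω => Real.rpow_nonneg
    (Finset.sum_nonneg fun ij _ => (hXp ij ω).1) _) hZ_int (ae_of_all _ hle_Z)).trans hnorm
end

section
/- There exists a constant α > 0 such that for every constant c' > 0 there exists a constant C > 0 (depending only on c') with the following property, for every real p > 1 and scalar Θ > 0: let {X_{i,j}}_{i ∈ [m], j ∈ [n]} be independent random variables taking values in [0, αΘ], let S_i := Σ_j X_{i,j}, and X̃_{i,j} := X_{i,j}/44. Suppose that for every sequence of reals v_1, …, v_m with v_i ≥ (1/α)^p for all i, one has Σ_{i=1}^m (1/v_i) · (Σ_j ν_{Θ/v_i^{1/p}, p}(X̃_{i,j}) − 1) ≤ 3, and suppose E max_i S_i ≤ c'·Θ. Then E (Σ_i S_i^p)^{1/p} ≤ C·Θ.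 -/
open MeasureTheory ProbabilityTheory

/-- The L-function of Latała: `ν_{ε,p}(X) = (1/p) · ln E (1 + X/ε)^p`. -/
noncomputable def nu {Ω : Type*} [MeasurableSpace Ω] (μ : Measure Ω) (p ε : ℝ) (X : Ω → ℝ) : ℝ :=
  (1 / p) * Real.log (∫ ω, (1 + X ω / ε) ^ p ∂μ)

/-!
Take `α = 1` and `C = 44 e⁴`, and write `g_i(v) = ∑_j ν_{Θ/v^{1/p}, p}(X̃_{i,j})`.
Since `∑_j y_j ≤ ∏_j (1 + y_j)` for `y_j ≥ 0`, independence gives for each row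
`E S_i^p · v / (44Θ)^p ≤ exp (p g_i(v))`.
Testing the hypothesis with `v = 1` in row `i` and `v = R → ∞` in the other rows gives
`g_i(1) ≤ 4`, so `w_i := E S_i^p / (44Θe⁴)^p ≤ 1`; testing it with `v_i = 1 / w_i` makes the
`i`-th term at least `3 w_i`, whence `∑_i w_i ≤ 1`. Jensen's inequality for the concave map
`x ↦ x^{1/p}` then bounds `E ‖S‖_p` by `44Θe⁴`.
-/

open Real Finset Filter

lemma le_of_forall_one_le_le_add_div {a b z : ℝ} (h : ∀ R : ℝ, 1 ≤ R → a ≤ b + z / R) :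
    a ≤ b := by
  have hlim : Tendsto (fun R : ℝ => b + z / R) atTop (nhds b) := by
    simpa using (tendsto_const_nhds (x := b)).add
      ((tendsto_const_nhds (x := z)).div_atTop tendsto_id)
  exact ge_of_tendsto hlim ((eventually_ge_atTop 1).mono h)

lemma one_add_sum_le_prod_one_add {ι : Type*} (s : Finset ι) {f : ι → ℝ}
    (hf : ∀ i ∈ s, 0 ≤ f i) : 1 + ∑ i ∈ s, f i ≤ ∏ i ∈ s, (1 + f i) := by
  classical
  induction s using Finset.induction_on with
  | empty => simp
  | insert a s ha ih =>
    rw [sum_insert ha, prod_insert ha]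
    have hfa := hf a (mem_insert_self a s)
    have hs := sum_nonneg fun i hi => hf i (mem_insert_of_mem hi)
    have := ih fun i hi => hf i (mem_insert_of_mem hi)
    nlinarith

lemma div_div_rpow_one_div_rpow {s a v p : ℝ} (hs : 0 ≤ s) (ha : 0 ≤ a) (hv : 0 ≤ v)
    (hp : p ≠ 0) : (s / (a / v ^ (1 / p))) ^ p = s ^ p / a ^ p * v := by
  rw [div_div_eq_mul_div, div_rpow (mul_nonneg hs (rpow_nonneg hv _)) ha,
    mul_rpow hs (rpow_nonneg hv _), one_div, rpow_inv_rpow hv hp, mul_div_right_comm]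

lemma rpow_le_one_add {x q : ℝ} (hx : 0 ≤ x) (hq0 : 0 ≤ q) (hq1 : q ≤ 1) : x ^ q ≤ 1 + x := by
  rcases le_total x 1 with h | h
  · linarith [rpow_le_one hx h hq0]
  · have := rpow_le_rpow_of_exponent_le h hq1
    rw [rpow_one] at this
    linarith

section Jensen

variable {Ω : Type*} [MeasurableSpace Ω] {μ : Measure Ω} [IsProbabilityMeasure μ]

lemma integral_rpow_le_rpow_integral {f : Ω → ℝ} {q : ℝ} (hf0 : ∀ ω, 0 ≤ f ω)
    (hf : Integrable f μ) (hq0 : 0 ≤ q) (hq1 : q ≤ 1) :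
    ∫ ω, f ω ^ q ∂μ ≤ (∫ ω, f ω ∂μ) ^ q := by
  have hfq : Integrable (fun ω => f ω ^ q) μ := by
    refine ((integrable_const 1).add hf).mono'
      (hf.aestronglyMeasurable.aemeasurable.pow_const q).aestronglyMeasurable
      (ae_of_all _ fun ω => ?_)
    rw [norm_of_nonneg (rpow_nonneg (hf0 ω) q)]
    exact rpow_le_one_add (hf0 ω) hq0 hq1
  exact (concaveOn_rpow hq0 hq1).le_map_integral
    (continuousOn_id.rpow_const fun _ _ => Or.inr hq0) isClosed_Ici (ae_of_all _ hf0) hf hfq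

lemma integral_rpow_sum_rpow_le {ι : Type*} [Fintype ι] {Z : ι → Ω → ℝ} {p a K : ℝ}
    (hZ0 : ∀ i ω, 0 ≤ Z i ω) (hZ : ∀ i, Integrable (fun ω => Z i ω ^ p) μ) (hp : 1 ≤ p)
    (ha : 0 < a) (hK : 0 ≤ K) (h : ∑ i, (∫ ω, Z i ω ^ p ∂μ) / a ^ p ≤ K ^ p) :
    ∫ ω, (∑ i, Z i ω ^ p) ^ (1 / p) ∂μ ≤ a * K := by
  have hp0 : 0 < p := one_pos.trans_le hp
  have hsum0 : ∀ ω, 0 ≤ ∑ i, Z i ω ^ p := fun ω => sum_nonneg fun i _ => rpow_nonneg (hZ0 i ω) p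
  have hmoment : ∫ ω, ∑ i, Z i ω ^ p ∂μ ≤ (a * K) ^ p := by
    rwa [integral_finsetSum _ fun i _ => hZ i, mul_rpow ha.le hK, ← div_le_iff₀' (by positivity),
      sum_div]
  calc ∫ ω, (∑ i, Z i ω ^ p) ^ (1 / p) ∂μ
      ≤ (∫ ω, ∑ i, Z i ω ^ p ∂μ) ^ (1 / p) :=
        integral_rpow_le_rpow_integral hsum0 (integrable_finsetSum _ fun i _ => hZ i)
          (by positivity) ((div_le_one hp0).2 hp)
    _ ≤ ((a * K) ^ p) ^ (1 / p) :=
        rpow_le_rpow (integral_nonneg hsum0) hmoment (by positivity)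
    _ = a * K := by rw [one_div, rpow_rpow_inv (mul_nonneg ha.le hK) hp0.ne']

end Jensen

section LFunction

variable {Ω : Type*} [MeasurableSpace Ω] {μ : Measure Ω} {p ε b : ℝ}

lemma nu_div_const (Y : Ω → ℝ) (c : ℝ) :
    nu μ p ε (fun ω => Y ω / c) = nu μ p (c * ε) Y := by
  simp only [nu, div_div]

lemma one_le_one_add_div_rpow {y : ℝ} (hy : 0 ≤ y) (hε : 0 < ε) (hp : 0 ≤ p) :
    1 ≤ (1 + y / ε) ^ p :=
  one_le_rpow (le_add_of_nonneg_right (div_nonneg hy hε.le)) hp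

lemma one_add_div_rpow_le {y : ℝ} (hy : y ∈ Set.Icc 0 b) (hε : 0 < ε) (hp : 0 ≤ p) :
    (1 + y / ε) ^ p ≤ (1 + b / ε) ^ p := by
  have := div_nonneg hy.1 hε.le
  gcongr
  exact hy.2

lemma integrable_one_add_div_rpow [IsFiniteMeasure μ] {Y : Ω → ℝ} (hY : Measurable Y)
    (hYb : ∀ ω, Y ω ∈ Set.Icc 0 b) (hε : 0 < ε) (hp : 0 ≤ p) :
    Integrable (fun ω => (1 + Y ω / ε) ^ p) μ :=
  Integrable.of_mem_Icc 1 ((1 + b / ε) ^ p)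
    ((measurable_const.add (hY.div_const ε)).pow_const p).aemeasurable
    (ae_of_all _ fun ω => ⟨one_le_one_add_div_rpow (hYb ω).1 hε hp,
      one_add_div_rpow_le (hYb ω) hε hp⟩)

variable [IsProbabilityMeasure μ]

lemma one_le_integral_one_add_div_rpow {Y : Ω → ℝ} (hY : Measurable Y)
    (hYb : ∀ ω, Y ω ∈ Set.Icc 0 b) (hε : 0 < ε) (hp : 0 ≤ p) :
    1 ≤ ∫ ω, (1 + Y ω / ε) ^ p ∂μ := by
  simpa using integral_mono (integrable_const (μ := μ) (1 : ℝ))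
    (integrable_one_add_div_rpow hY hYb hε hp) fun ω => one_le_one_add_div_rpow (hYb ω).1 hε hp

lemma nu_nonneg {Y : Ω → ℝ} (hY : Measurable Y) (hYb : ∀ ω, Y ω ∈ Set.Icc 0 b) (hε : 0 < ε)
    (hp : 0 < p) : 0 ≤ nu μ p ε Y :=
  mul_nonneg (by positivity) (log_nonneg (one_le_integral_one_add_div_rpow hY hYb hε hp.le))

lemma exp_mul_nu {Y : Ω → ℝ} (hY : Measurable Y) (hYb : ∀ ω, Y ω ∈ Set.Icc 0 b) (hε : 0 < ε)
    (hp : 0 < p) : exp (p * nu μ p ε Y) = ∫ ω, (1 + Y ω / ε) ^ p ∂μ := by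
  rw [nu, ← mul_assoc, mul_one_div_cancel hp.ne', one_mul,
    exp_log (one_pos.trans_le (one_le_integral_one_add_div_rpow hY hYb hε hp.le))]

variable {ι : Type*} [Fintype ι] {Y : ι → Ω → ℝ}

lemma integrable_sum_rpow (hY : ∀ j, Measurable (Y j)) (hYb : ∀ j ω, Y j ω ∈ Set.Icc 0 b)
    (hp : 0 ≤ p) : Integrable (fun ω => (∑ j, Y j ω) ^ p) μ :=
  Integrable.of_mem_Icc 0 ((Fintype.card ι • b) ^ p)
    ((Finset.measurable_sum _ fun j _ => hY j).pow_const p).aemeasurable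
    (ae_of_all _ fun ω => ⟨rpow_nonneg (sum_nonneg fun j _ => (hYb j ω).1) p,
      rpow_le_rpow (sum_nonneg fun j _ => (hYb j ω).1)
        (sum_le_card_nsmul univ _ _ fun j _ => (hYb j ω).2) hp⟩)

theorem integral_sum_div_rpow_le_exp_sum_nu (hY : ∀ j, Measurable (Y j))
    (hYb : ∀ j ω, Y j ω ∈ Set.Icc 0 b) (hind : iIndepFun Y μ) (hε : 0 < ε) (hp : 0 < p) :
    ∫ ω, ((∑ j, Y j ω) / ε) ^ p ∂μ ≤ exp (p * ∑ j, nu μ p ε (Y j)) := by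
  have hfactor : ∀ j ω, 1 ≤ (1 + Y j ω / ε) ^ p := fun j ω =>
    one_le_one_add_div_rpow (hYb j ω).1 hε hp.le
  have hpoint : ∀ ω, ((∑ j, Y j ω) / ε) ^ p ≤ ∏ j, (1 + Y j ω / ε) ^ p := by
    intro ω
    have hnn : ∀ j ∈ univ, 0 ≤ Y j ω / ε := fun j _ => div_nonneg (hYb j ω).1 hε.le
    rw [finsetProd_rpow _ _ (fun j hj => by linarith [hnn j hj]), sum_div]
    gcongr
    · exact sum_nonneg hnn
    · linarith [one_add_sum_le_prod_one_add univ hnn]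
  have hprod : Integrable (fun ω => ∏ j, (1 + Y j ω / ε) ^ p) μ :=
    Integrable.of_mem_Icc 0 (∏ _j : ι, (1 + b / ε) ^ p)
      (Finset.measurable_prod _ fun j _ =>
        (measurable_const.add ((hY j).div_const ε)).pow_const p).aemeasurable
      (ae_of_all _ fun ω => ⟨prod_nonneg fun j _ => zero_le_one.trans (hfactor j ω),
        prod_le_prod (fun j _ => zero_le_one.trans (hfactor j ω))
          fun j _ => one_add_div_rpow_le (hYb j ω) hε hp.le⟩)
  calc ∫ ω, ((∑ j, Y j ω) / ε) ^ p ∂μ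
      ≤ ∫ ω, ∏ j, (1 + Y j ω / ε) ^ p ∂μ :=
        integral_mono_of_nonneg (ae_of_all _ fun ω => rpow_nonneg
          (div_nonneg (sum_nonneg fun j _ => (hYb j ω).1) hε.le) p) hprod (ae_of_all _ hpoint)
    _ = ∏ j, ∫ ω, (1 + Y j ω / ε) ^ p ∂μ :=
        hind.integral_fun_prod_comp (f := fun _ y => (1 + y / ε) ^ p)
          (fun j => (hY j).aemeasurable) fun j =>
            ((continuous_const.add (continuous_id.div_const ε)).rpow_const
              fun _ => Or.inr hp.le).aestronglyMeasurable
    _ = exp (p * ∑ j, nu μ p ε (Y j)) := by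
        rw [mul_sum, exp_sum]
        exact prod_congr rfl fun j _ => (exp_mul_nu (hY j) (hYb j) hε hp).symm

theorem integral_sum_rpow_div_mul_le_exp_sum_nu {a v : ℝ} (hY : ∀ j, Measurable (Y j))
    (hYb : ∀ j ω, Y j ω ∈ Set.Icc 0 b) (hind : iIndepFun Y μ) (ha : 0 < a) (hv : 0 < v)
    (hp : 0 < p) :
    (∫ ω, (∑ j, Y j ω) ^ p ∂μ) / a ^ p * v ≤
      exp (p * ∑ j, nu μ p (a / v ^ (1 / p)) (Y j)) := by
  refine le_of_eq_of_le ?_ (integral_sum_div_rpow_le_exp_sum_nu hY hYb hind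
    (div_pos ha (rpow_pos_of_pos hv _)) hp)
  simp only [div_div_rpow_one_div_rpow (sum_nonneg fun j _ => (hYb j _).1) ha.le hv.le hp.ne',
    integral_mul_const, integral_div]

end LFunction

section Duality

variable {ι : Type*} [Fintype ι] {g : ι → ℝ → ℝ} {c : ℝ}

lemma le_add_one_of_forall_sum_le (hg0 : ∀ k v, 1 ≤ v → 0 ≤ g k v)
    (hL : ∀ v : ι → ℝ, (∀ k, 1 ≤ v k) → ∑ k, 1 / v k * (g k (v k) - 1) ≤ c) (i : ι) :
    g i 1 ≤ c + 1 := by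
  classical
  refine le_of_forall_one_le_le_add_div (z := Fintype.card ι) fun R hR => ?_
  have hR0 : 0 < 1 / R := one_div_pos.2 (one_pos.trans_le hR)
  set v := Function.update (fun _ => R) i 1
  have hv : ∀ k, 1 ≤ v k := fun k => by
    by_cases hk : k = i
    · simp [v, hk]
    · simp [v, hk, hR]
  have hterm : ∀ k ∈ univ, (if k = i then g i 1 - 1 + 1 / R else 0) - 1 / R ≤
      1 / v k * (g k (v k) - 1) := fun k _ => by
    by_cases hk : k = i
    · simp [v, hk]
    · simp only [v, hk, if_false, Function.update_of_ne hk]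
      nlinarith [hg0 k R hR]
  have := (sum_le_sum hterm).trans (hL v hv)
  simp only [sum_sub_distrib, sum_ite_eq', mem_univ, if_true, sum_const, card_univ,
    nsmul_eq_mul, mul_one_div] at this
  linarith

lemma sum_le_one_of_forall_sum_le (hg0 : ∀ k v, 1 ≤ v → 0 ≤ g k v)
    (hL : ∀ v : ι → ℝ, (∀ k, 1 ≤ v k) → ∑ k, 1 / v k * (g k (v k) - 1) ≤ c) (hc : 0 < c)
    {w : ι → ℝ} (hw : ∀ k, 0 < w k → w k ≤ 1 ∧ c + 1 ≤ g k (w k)⁻¹) : ∑ k, w k ≤ 1 := by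
  classical
  suffices c * ∑ k, w k ≤ c * 1 from le_of_mul_le_mul_left this hc
  refine le_of_forall_one_le_le_add_div (z := Fintype.card ι) fun R hR => ?_
  have hR0 : 0 < R⁻¹ := inv_pos.2 (one_pos.trans_le hR)
  set v : ι → ℝ := fun k => if 0 < w k then (w k)⁻¹ else R
  have hv : ∀ k, 1 ≤ v k := fun k => by
    by_cases hk : 0 < w k
    · simpa [v, hk] using one_le_inv₀ hk |>.2 (hw k hk).1
    · simp [v, hk, hR]
  have hterm : ∀ k ∈ univ, c * w k - 1 / R ≤ 1 / v k * (g k (v k) - 1) := fun k _ => by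
    by_cases hk : 0 < w k
    · simp only [v, hk, if_true, one_div, inv_inv]
      nlinarith [(hw k hk).2]
    · simp only [v, hk, if_false, one_div]
      nlinarith [hg0 k R hR]
  have := (sum_le_sum hterm).trans (hL v hv)
  simp only [sum_sub_distrib, ← mul_sum, sum_const, card_univ, nsmul_eq_mul, mul_one_div] at this
  linarith

theorem sum_le_exp_of_forall_sum_le {p : ℝ} (hp : 0 < p) (hc : 0 < c)
    (hg0 : ∀ k v, 1 ≤ v → 0 ≤ g k v)
    (hL : ∀ v : ι → ℝ, (∀ k, 1 ≤ v k) → ∑ k, 1 / v k * (g k (v k) - 1) ≤ c)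
    {B : ι → ℝ} (hB : ∀ k v, 1 ≤ v → B k * v ≤ exp (p * g k v)) :
    ∑ k, B k ≤ exp (p * (c + 1)) := by
  set E := exp (p * (c + 1))
  have hE : 0 < E := exp_pos _
  have hw : ∀ k, 0 < B k / E → B k / E ≤ 1 ∧ c + 1 ≤ g k (B k / E)⁻¹ := by
    intro k hk
    have hBk : 0 < B k := by simpa [hE] using hk
    have hle : B k / E ≤ 1 := by
      rw [div_le_one hE]
      simpa using (hB k 1 le_rfl).trans
        (exp_le_exp.2 (mul_le_mul_of_nonneg_left (le_add_one_of_forall_sum_le hg0 hL k) hp.le))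
    refine ⟨hle, ?_⟩
    have := hB k _ ((one_le_inv₀ hk).2 hle)
    rw [inv_div, mul_div_cancel₀ _ hBk.ne', exp_le_exp] at this
    rw [inv_div]
    exact le_of_mul_le_mul_left this hp
  have := sum_le_one_of_forall_sum_le hg0 hL hc hw
  rwa [← sum_div, div_le_one hE] at this

end Duality

theorem stmt_7 : ∃ α : ℝ, 0 < α ∧
    ∀ (c' : ℝ), 0 < c' → ∃ C : ℝ, 0 < C ∧
    ∀ (p : ℝ), 1 < p → ∀ (Θ : ℝ), 0 < Θ →
    ∀ (Ω : Type*) (_ : MeasurableSpace Ω) (μ : Measure Ω), IsProbabilityMeasure μ →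
    ∀ (m n : ℕ) (X : Fin m × Fin n → Ω → ℝ),
      (∀ ij, Measurable (X ij)) → (∀ ij ω, X ij ω ∈ Set.Icc 0 (α * Θ)) →
      iIndepFun X μ →
      (∀ (v : Fin m → ℝ), (∀ i, (1 / α) ^ p ≤ v i) →
        ∑ i, (1 / v i) *
            ((∑ j, nu μ p (Θ / v i ^ (1 / p)) (fun ω => X (i, j) ω / 44)) - 1) ≤ 3) →
      ∫ ω, ⨆ i, ∑ j, X (i, j) ω ∂μ ≤ c' * Θ →
      ∫ ω, (∑ i, (∑ j, X (i, j) ω) ^ p) ^ (1 / p) ∂μ ≤ C * Θ := by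
  refine ⟨1, one_pos, fun c' _ => ⟨44 * exp 4, by positivity, ?_⟩⟩
  intro p hp Θ hΘ Ω _ μ _ m n X hXmeas hX hXindep hnu _
  have hp0 : 0 < p := one_pos.trans hp
  simp only [nu_div_const, mul_div_assoc', div_one, one_rpow] at hnu
  have hε : ∀ v : ℝ, 1 ≤ v → 0 < 44 * Θ / v ^ (1 / p) := fun v hv =>
    div_pos (by positivity) (rpow_pos_of_pos (one_pos.trans_le hv) _)
  have hmoment := sum_le_exp_of_forall_sum_le hp0 three_pos
    (fun i v hv => sum_nonneg fun j _ => nu_nonneg (hXmeas (i, j)) (hX (i, j)) (hε v hv) hp0) hnu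
    fun i v hv => integral_sum_rpow_div_mul_le_exp_sum_nu (fun j => hXmeas (i, j))
      (fun j => hX (i, j)) (hXindep.precomp (Prod.mk_right_injective i)) (by positivity)
      (one_pos.trans_le hv) hp0
  rw [show (3 : ℝ) + 1 = 4 by norm_num, mul_comm p 4, exp_mul] at hmoment
  calc _ ≤ 44 * Θ * exp 4 :=
        integral_rpow_sum_rpow_le (fun i ω => sum_nonneg fun j _ => (hX (i, j) ω).1)
          (fun i => integrable_sum_rpow (fun j => hXmeas (i, j)) (fun j => hX (i, j)) hp0.le)
          hp.le (by positivity) (exp_pos 4).le hmoment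
    _ = 44 * exp 4 * Θ := by ring
end
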